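/- arXiv:2309.11818 — 5 statements merged into one kernel-verified Lean document; each statement's English description precedes it below -/
import Mathlib

section
/- Given a monotone Boolean CNF formula φ = (φ⁺, φ⁻) over variable set X (each clause a set of 3 variables, all positive or all negative), and assuming every satisfying assignment maps some variable to 1: for every nonempty Y ⊆ X, the assignment m_Y (mapping A to 1 iff A ∈ Y) satisfies φ if and only if the step function s^Y violates the inequality ∑_{C ∈ φ⁺} h(X | C) + ∑_{C ∈ φ⁻} I(C) ≥ h(X), where h(X|C) = h(X) - h(C) and I(C) is the three-variate mutual information over the variables of C. -/
/-!
For `Y ≠ ∅` the step function `s^Y` turns `h(X | C)` into the indicator of `C ∩ Y = ∅`, and,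
since alternating sums over the powerset of a nonempty set vanish, it turns `I(C)` into the
indicator of `C ⊆ Y`. So the left-hand side of the inequality counts the clauses that `m_Y`
violates, and the inequality `≥ h(X) = 1` fails exactly when there are none.
-/

open Finset

section

variable {α R : Type*} [DecidableEq α] [Ring R]

theorem sum_powerset_neg_one_pow_card_eq_ite (s : Finset α) :
    ∑ t ∈ s.powerset, (-1 : R) ^ #t = if s = ∅ then 1 else 0 := by
  have h := congrArg (Int.cast : ℤ → R) (sum_powerset_neg_one_pow_card (x := s))
  push_cast at h
  exact h

theorem sum_powerset_neg_one_pow_card_succ_mul_step (Y : Finset α) {C : Finset α}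
    (hC : C.Nonempty) :
    ∑ T ∈ C.powerset, (-1 : R) ^ (#T + 1) * (if T ∩ Y = ∅ then 0 else 1) =
      if C ⊆ Y then 1 else 0 := by
  have hfilter : C.powerset.filter (fun T => T ∩ Y = ∅) = (C \ Y).powerset := by
    ext T
    simp only [mem_filter, mem_powerset, subset_sdiff, disjoint_iff_inter_eq_empty]
  calc ∑ T ∈ C.powerset, (-1 : R) ^ (#T + 1) * (if T ∩ Y = ∅ then 0 else 1)
      = ∑ T ∈ C.powerset.filter (fun T => T ∩ Y = ∅), (-1 : R) ^ #T -
          ∑ T ∈ C.powerset, (-1 : R) ^ #T := by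
        rw [sum_filter, ← sum_sub_distrib]
        refine sum_congr rfl fun T _ => ?_
        split_ifs <;> simp [pow_succ]
    _ = ∑ T ∈ (C \ Y).powerset, (-1 : R) ^ #T := by
        rw [hfilter, sum_powerset_neg_one_pow_card_eq_ite C, if_neg hC.ne_empty, sub_zero]
    _ = if C ⊆ Y then 1 else 0 := by
        simp only [sum_powerset_neg_one_pow_card_eq_ite, sdiff_eq_empty_iff_subset]

end

theorem forall_not_and_forall_not_iff_card_filter_add_lt_one {β γ : Type*}
    {s : Finset β} {t : Finset γ} {p : β → Prop} {q : γ → Prop}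
    [DecidablePred p] [DecidablePred q] :
    ((∀ x ∈ s, ¬ p x) ∧ ∀ y ∈ t, ¬ q y) ↔ (#(s.filter p) : ℝ) + #(t.filter q) < 1 := by
  rw [← filter_eq_empty_iff, ← filter_eq_empty_iff, ← card_eq_zero, ← card_eq_zero]
  norm_cast
  omega

theorem monotone_sat_iff_step_violates_general {α : Type*} [Fintype α] [DecidableEq α]
    (pos neg : Finset (Finset α))
    (hneg : ∀ C ∈ neg, C.card = 3) :
    ∀ Y : Finset α, Y.Nonempty →
      (((∀ C ∈ pos, ∃ a ∈ C, a ∈ Y) ∧ (∀ C ∈ neg, ∃ a ∈ C, a ∉ Y)) ↔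
        ¬ ((∑ C ∈ pos,
              ((if (Finset.univ : Finset α) ∩ Y = ∅ then (0:ℝ) else 1) -
                (if C ∩ Y = ∅ then (0:ℝ) else 1))) +
           (∑ C ∈ neg, ∑ T ∈ C.powerset,
              (-1:ℝ) ^ (T.card + 1) * (if T ∩ Y = ∅ then (0:ℝ) else 1)) ≥
           (if (Finset.univ : Finset α) ∩ Y = ∅ then (0:ℝ) else 1))) := by
  intro Y hY
  have hcond_entropy (C : Finset α) :
      (1 : ℝ) - (if C ∩ Y = ∅ then 0 else 1) = if C ∩ Y = ∅ then 1 else 0 := by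
    split_ifs <;> norm_num
  have hmutual_info : ∀ C ∈ neg, ∑ T ∈ C.powerset,
      (-1 : ℝ) ^ (#T + 1) * (if T ∩ Y = ∅ then 0 else 1) = if C ⊆ Y then 1 else 0 :=
    fun C hC => sum_powerset_neg_one_pow_card_succ_mul_step Y
      (card_pos.mp (by rw [hneg C hC]; norm_num))
  have hpos_sat (C : Finset α) : (∃ a ∈ C, a ∈ Y) ↔ ¬ C ∩ Y = ∅ := by
    rw [← disjoint_iff_inter_eq_empty, not_disjoint_iff]
  have hneg_sat (C : Finset α) : (∃ a ∈ C, a ∉ Y) ↔ ¬ C ⊆ Y := not_subset.symm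
  rw [univ_inter, if_neg hY.ne_empty, sum_congr rfl fun C _ => hcond_entropy C,
    sum_congr rfl hmutual_info, sum_boole, sum_boole, ge_iff_le, not_le]
  simp only [hpos_sat, hneg_sat]
  exact forall_not_and_forall_not_iff_card_filter_add_lt_one

/-- for a monotone 3-CNF `φ = (pos, neg)` whose every satisfying
assignment maps some variable to 1, and any nonempty `Y`, the assignment `m_Y`
satisfies `φ` iff the step function `s^Y` violates the inequality
`∑_{C ∈ pos} h(X | C) + ∑_{C ∈ neg} I(C) ≥ h(X)`. -/
theorem monotone_sat_iff_step_violates {α : Type*} [Fintype α] [DecidableEq α]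
    (pos neg : Finset (Finset α))
    (hpos : ∀ C ∈ pos, C.card = 3) (hneg : ∀ C ∈ neg, C.card = 3)
    (hsat : ∀ m : α → Bool,
      ((∀ C ∈ pos, ∃ a ∈ C, m a = true) ∧ (∀ C ∈ neg, ∃ a ∈ C, m a = false)) →
      ∃ a, m a = true) :
    ∀ Y : Finset α, Y.Nonempty →
      (((∀ C ∈ pos, ∃ a ∈ C, a ∈ Y) ∧ (∀ C ∈ neg, ∃ a ∈ C, a ∉ Y)) ↔
        ¬ ((∑ C ∈ pos,
              ((if (Finset.univ : Finset α) ∩ Y = ∅ then (0:ℝ) else 1) -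
                (if C ∩ Y = ∅ then (0:ℝ) else 1))) +
           (∑ C ∈ neg, ∑ T ∈ C.powerset,
              (-1:ℝ) ^ (T.card + 1) * (if T ∩ Y = ∅ then (0:ℝ) else 1)) ≥
           (if (Finset.univ : Finset α) ∩ Y = ∅ then (0:ℝ) else 1))) :=
  monotone_sat_iff_step_violates_general pos neg hneg
end

section
/- An information inequality c_1 h(X_1) + ... + c_k h(X_k) ≥ 0 (with real coefficients) is valid over all monotone set functions if and only if it is valid over all monotone Boolean-valued (0/1) set functions. -/
/-- an information inequality `∑ i, c i * h (X i) ≥ 0` is valid over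
all monotone set functions iff it is valid over all monotone Boolean-valued (0/1)
set functions. -/
theorem valid_monotone_iff_valid_boolean_monotone {α : Type*} [Fintype α] (k : ℕ)
    (c : Fin k → ℝ) (X : Fin k → Finset α) :
    (∀ h : Finset α → ℝ, h ∅ = 0 → (∀ Y Z : Finset α, Y ⊆ Z → h Y ≤ h Z) →
        0 ≤ ∑ i, c i * h (X i)) ↔
    (∀ h : Finset α → ℝ, h ∅ = 0 → (∀ Y Z : Finset α, Y ⊆ Z → h Y ≤ h Z) →
        (∀ Y : Finset α, h Y = 0 ∨ h Y = 1) →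
        0 ≤ ∑ i, c i * h (X i)) := by
  constructor
  · intro H h h0 hm _
    exact H h h0 hm
  · intro H
    suffices key : ∀ n : ℕ, ∀ h : Finset α → ℝ, (Finset.univ.image h).card ≤ n →
        h ∅ = 0 → (∀ Y Z : Finset α, Y ⊆ Z → h Y ≤ h Z) → 0 ≤ ∑ i, c i * h (X i) by
      intro h h0 hm
      exact key _ h le_rfl h0 hm
    intro n
    induction n with
    | zero =>
      intro h hc h0 hm
      have h1 : h ∅ ∈ Finset.univ.image h :=
        Finset.mem_image_of_mem h (Finset.mem_univ _)
      have := Finset.card_pos.mpr ⟨_, h1⟩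
      omega
    | succ n ih =>
      intro h hc h0 hm
      have hnn : ∀ Y, 0 ≤ h Y := fun Y => h0 ▸ hm ∅ Y (Finset.empty_subset Y)
      by_cases hz : ∀ Y, h Y = 0
      · simp [hz]
      push_neg at hz
      obtain ⟨W, hW⟩ := hz
      have hWpos : 0 < h W := lt_of_le_of_ne (hnn W) (Ne.symm hW)
      set S := (Finset.univ.image h).filter (fun v => 0 < v) with hSdef
      have hSne : S.Nonempty := ⟨h W, by
        refine Finset.mem_filter.mpr ⟨Finset.mem_image_of_mem h (Finset.mem_univ W), hWpos⟩⟩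
      set m := S.min' hSne with hmdef
      have hmS : m ∈ S := S.min'_mem hSne
      have hmpos : 0 < m := (Finset.mem_filter.mp hmS).2
      have hmin : ∀ Y, 0 < h Y → m ≤ h Y := fun Y hy =>
        S.min'_le _ (Finset.mem_filter.mpr ⟨Finset.mem_image_of_mem h (Finset.mem_univ Y), hy⟩)
      set b : Finset α → ℝ := fun Y => if 0 < h Y then 1 else 0 with hbdef
      have hb0 : b ∅ = 0 := by simp [hbdef, h0]
      have hbm : ∀ Y Z : Finset α, Y ⊆ Z → b Y ≤ b Z := by
        intro Y Z hYZ
        simp only [hbdef]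
        by_cases hy : 0 < h Y
        · simp [hy, lt_of_lt_of_le hy (hm Y Z hYZ)]
        · simp only [hy, if_false]
          split <;> norm_num
      have hbsum : 0 ≤ ∑ i, c i * b (X i) := H b hb0 hbm (fun Y => by
        by_cases hy : 0 < h Y <;> simp [hbdef, hy])
      set g : Finset α → ℝ := fun Y => h Y - m * b Y with hgdef
      have hzero : ∀ Y, ¬ 0 < h Y → h Y = 0 := fun Y hy =>
        le_antisymm (not_lt.mp hy) (hnn Y)
      have hg0 : g ∅ = 0 := by simp [hgdef, hb0, h0]
      have hgval : ∀ Y, g Y = if 0 < h Y then h Y - m else 0 := by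
        intro Y
        by_cases hy : 0 < h Y
        · simp [hgdef, hbdef, hy]
        · simp [hgdef, hbdef, hy, hzero Y hy]
      have hgm : ∀ Y Z : Finset α, Y ⊆ Z → g Y ≤ g Z := by
        intro Y Z hYZ
        rw [hgval Y, hgval Z]
        by_cases hy : 0 < h Y
        · simp only [hy, if_true, lt_of_lt_of_le hy (hm Y Z hYZ)]
          exact sub_le_sub_right (hm Y Z hYZ) m
        · simp only [hy, if_false]
          split
          · next hz' => linarith [hmin Z hz']
          · exact le_refl 0
      -- card bound
      have h0mem : (0:ℝ) ∈ Finset.univ.image h := by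
        rw [← h0]; exact Finset.mem_image_of_mem h (Finset.mem_univ _)
      have hmmem : m ∈ (Finset.univ.image h).erase 0 :=
        Finset.mem_erase.mpr ⟨ne_of_gt hmpos, (Finset.mem_filter.mp hmS).1⟩
      have hsub : Finset.univ.image g ⊆
          insert 0 ((((Finset.univ.image h).erase 0).erase m).image (fun v => v - m)) := by
        intro x hx
        obtain ⟨Y, -, rfl⟩ := Finset.mem_image.mp hx
        rw [hgval Y]
        by_cases hy : 0 < h Y
        · by_cases hym : h Y = m
          · simp [hy, hym]
          · refine Finset.mem_insert_of_mem (Finset.mem_image.mpr ⟨h Y, ?_, by simp [hy]⟩)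
            exact Finset.mem_erase.mpr ⟨hym,
              Finset.mem_erase.mpr ⟨ne_of_gt hy, Finset.mem_image_of_mem h (Finset.mem_univ Y)⟩⟩
        · simp [hy]
      have hcard2 : 2 ≤ (Finset.univ.image h).card := by
        have h1 : 1 ≤ ((Finset.univ.image h).erase 0).card :=
          Finset.card_pos.mpr ⟨m, hmmem⟩
        have h2 := Finset.card_erase_of_mem h0mem
        omega
      have hcg : (Finset.univ.image g).card ≤ n := by
        have := Finset.card_le_card hsub
        have h3 := Finset.card_insert_le (0:ℝ)
          ((((Finset.univ.image h).erase 0).erase m).image (fun v => v - m))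
        have h4 := Finset.card_image_le (s := ((Finset.univ.image h).erase 0).erase m)
          (f := fun v => v - m)
        have h5 := Finset.card_erase_of_mem hmmem
        have h6 := Finset.card_erase_of_mem h0mem
        omega
      have hgsum : 0 ≤ ∑ i, c i * g (X i) := ih g hcg hg0 hgm
      have hsplit : ∑ i, c i * h (X i) =
          ∑ i, c i * g (X i) + m * ∑ i, c i * b (X i) := by
        rw [Finset.mul_sum, ← Finset.sum_add_distrib]
        refine Finset.sum_congr rfl fun i _ => ?_
        simp only [hgdef]
        ring
      rw [hsplit]
      have := mul_nonneg (le_of_lt hmpos) hbsum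
      linarith
end

section
/- Let φ(X) be an information inequality c_1 h(X_1)+...+c_n h(X_n) ≥ d_1 h(Y_1)+...+d_m h(Y_m) with all c_i, d_i > 0 and every Y_i a singleton. Then φ is valid over all step functions on X if and only if φ is valid over all monotone functions on X. -/
open Finset in
private lemma step_aux {α : Type*} [Fintype α] [DecidableEq α] {k m : ℕ}
    (c : Fin k → ℝ) (d : Fin m → ℝ) (hc : ∀ i, 0 < c i)
    (X : Fin k → Finset α) (Y : Fin m → α)
    (hstep : ∀ U : Finset α, U.Nonempty →
        (∑ j, d j * (if ({Y j} : Finset α) ∩ U = ∅ then (0:ℝ) else 1)) ≤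
          ∑ i, c i * (if X i ∩ U = ∅ then (0:ℝ) else 1)) :
    ∀ n : ℕ, ∀ g : α → ℝ, (∀ a, 0 ≤ g a) →
      (Finset.univ.filter fun a => 0 < g a).card ≤ n →
      (∑ j, d j * g (Y j)) ≤ ∑ i, c i * ((X i).fold max 0 g) := by
  intro n
  induction n with
  | zero =>
    intro g hg0 hcard
    have hP : (Finset.univ.filter fun a => 0 < g a) = ∅ :=
      Finset.card_eq_zero.mp (Nat.le_zero.mp hcard)
    have hzero : ∀ a, g a = 0 := by
      intro a
      by_contra hne
      have : a ∈ (Finset.univ.filter fun a => 0 < g a) := by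
        simp [lt_of_le_of_ne (hg0 a) (Ne.symm hne)]
      simp [hP] at this
    have hL : (∑ j, d j * g (Y j)) = 0 := by
      apply Finset.sum_eq_zero; intro j _; rw [hzero]; ring
    rw [hL]
    apply Finset.sum_nonneg
    intro i _
    exact mul_nonneg (hc i).le ((le_fold_max _).mpr (Or.inl le_rfl))
  | succ n ih =>
    intro g hg0 hcard
    set P := Finset.univ.filter fun a => 0 < g a with hPdef
    rcases P.eq_empty_or_nonempty with hP | hP
    · exact ih g hg0 (by rw [← hPdef, hP]; simp)
    have hmemP : ∀ a, a ∈ P ↔ 0 < g a := by intro a; simp [hPdef]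
    set ε := P.inf' hP g with hεdef
    have hε : 0 < ε := by
      rw [hεdef, Finset.lt_inf'_iff]
      intro a ha; exact (hmemP a).mp ha
    have hεle : ∀ a ∈ P, ε ≤ g a := fun a ha => Finset.inf'_le g ha
    obtain ⟨a₀, ha₀P, ha₀⟩ := Finset.exists_mem_eq_inf' hP g
    set g' := fun a => if 0 < g a then g a - ε else 0 with hg'def
    have hg'0 : ∀ a, 0 ≤ g' a := by
      intro a
      simp only [hg'def]
      split_ifs with h
      · linarith [hεle a ((hmemP a).mpr h)]
      · exact le_rfl
    -- support of g' is strictly smaller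
    have hsub : (Finset.univ.filter fun a => 0 < g' a) ⊆ P.erase a₀ := by
      intro a ha
      simp only [Finset.mem_filter, Finset.mem_univ, true_and, hg'def] at ha
      by_cases h : 0 < g a
      · rw [if_pos h] at ha
        refine Finset.mem_erase.mpr ⟨?_, (hmemP a).mpr h⟩
        intro hEq; rw [hEq, ← ha₀] at ha; linarith
      · rw [if_neg h] at ha; exact absurd ha (lt_irrefl 0)
    have hcard' : (Finset.univ.filter fun a => 0 < g' a).card ≤ n := by
      have h1 := Finset.card_le_card hsub
      have h2 : (P.erase a₀).card = P.card - 1 := Finset.card_erase_of_mem ha₀P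
      have h3 : 1 ≤ P.card := Finset.card_pos.mpr hP
      omega
    -- pointwise decomposition on singletons
    have hpoint : ∀ a, g a = g' a + ε * (if ({a} : Finset α) ∩ P = ∅ then (0:ℝ) else 1) := by
      intro a
      by_cases h : 0 < g a
      · have haP : a ∈ P := (hmemP a).mpr h
        have : ({a} : Finset α) ∩ P ≠ ∅ := by
          rw [← Finset.nonempty_iff_ne_empty]
          exact ⟨a, Finset.mem_inter.mpr ⟨Finset.mem_singleton_self a, haP⟩⟩
        simp only [hg'def, if_pos h, if_neg this]
        ring
      · have hga : g a = 0 := le_antisymm (not_lt.mp h) (hg0 a)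
        have haP : a ∉ P := fun hmem => h ((hmemP a).mp hmem)
        have : ({a} : Finset α) ∩ P = ∅ := by
          rw [Finset.eq_empty_iff_forall_notMem]
          intro x hx
          rw [Finset.mem_inter, Finset.mem_singleton] at hx
          exact haP (hx.1 ▸ hx.2)
        simp only [hg'def, if_neg h, if_pos this, hga]
        ring
    -- fold decomposition
    have hfold : ∀ S : Finset α,
        S.fold max 0 g = S.fold max 0 g' + ε * (if S ∩ P = ∅ then (0:ℝ) else 1) := by
      intro S
      by_cases hSP : S ∩ P = ∅
      · have hz : ∀ a ∈ S, g a = 0 := by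
          intro a haS
          by_contra hne
          have haP : a ∈ P := (hmemP a).mpr (lt_of_le_of_ne (hg0 a) (Ne.symm hne))
          have : a ∈ S ∩ P := Finset.mem_inter.mpr ⟨haS, haP⟩
          simp [hSP] at this
        have hz' : ∀ a ∈ S, g' a = 0 := by
          intro a haS
          simp only [hg'def]
          rw [if_neg (by rw [hz a haS]; exact lt_irrefl 0)]
        have e1 : S.fold max 0 g = 0 :=
          le_antisymm ((fold_max_le _).mpr ⟨le_rfl, fun a haS => (hz a haS).le⟩)
            ((le_fold_max _).mpr (Or.inl le_rfl))
        have e2 : S.fold max 0 g' = 0 :=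
          le_antisymm ((fold_max_le _).mpr ⟨le_rfl, fun a haS => (hz' a haS).le⟩)
            ((le_fold_max _).mpr (Or.inl le_rfl))
        rw [e1, e2, if_pos hSP]; ring
      · obtain ⟨a₁, ha₁⟩ := Finset.nonempty_iff_ne_empty.mpr hSP
        rw [Finset.mem_inter] at ha₁
        have hεfold : ε ≤ S.fold max 0 g :=
          (le_fold_max _).mpr (Or.inr ⟨a₁, ha₁.1, hεle a₁ ha₁.2⟩)
        have hfold'0 : (0:ℝ) ≤ S.fold max 0 g' := (le_fold_max _).mpr (Or.inl le_rfl)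
        have le1 : S.fold max 0 g ≤ S.fold max 0 g' + ε := by
          apply (fold_max_le _).mpr
          constructor
          · linarith
          · intro a haS
            have hga' : g' a ≤ S.fold max 0 g' :=
              (le_fold_max _).mpr (Or.inr ⟨a, haS, le_rfl⟩)
            by_cases h : 0 < g a
            · have : g a = g' a + ε := by simp only [hg'def, if_pos h]; ring
              linarith
            · have : g a = 0 := le_antisymm (not_lt.mp h) (hg0 a)
              linarith
        have le2 : S.fold max 0 g' ≤ S.fold max 0 g - ε := by
          apply (fold_max_le _).mpr
          constructor
          · linarith
          · intro a haS
            have hga : g a ≤ S.fold max 0 g := (le_fold_max _).mpr (Or.inr ⟨a, haS, le_rfl⟩)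
            simp only [hg'def]
            split_ifs with h
            · linarith
            · linarith
        rw [if_neg hSP]
        linarith
    calc ∑ j, d j * g (Y j)
        = (∑ j, d j * g' (Y j)) +
            ε * ∑ j, d j * (if ({Y j} : Finset α) ∩ P = ∅ then (0:ℝ) else 1) := by
          rw [Finset.mul_sum, ← Finset.sum_add_distrib]
          apply Finset.sum_congr rfl
          intro j _
          rw [hpoint (Y j)]; ring
      _ ≤ (∑ i, c i * (X i).fold max 0 g') +
            ε * ∑ i, c i * (if X i ∩ P = ∅ then (0:ℝ) else 1) :=
          add_le_add (ih g' hg'0 hcard')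
            (mul_le_mul_of_nonneg_left (hstep P hP) hε.le)
      _ = ∑ i, c i * (X i).fold max 0 g := by
          rw [Finset.mul_sum, ← Finset.sum_add_distrib]
          apply Finset.sum_congr rfl
          intro i _
          rw [hfold (X i)]; ring

/-- an inequality `∑ c_i h(X_i) ≥ ∑ d_j h(Y_j)` with positive
coefficients, where every `Y_j` is a singleton, is valid over all step functions
iff it is valid over all monotone functions. -/
theorem singleton_rhs_valid_step_iff_valid_monotone {α : Type*} [Fintype α]
    [DecidableEq α] (k m : ℕ)
    (c : Fin k → ℝ) (d : Fin m → ℝ) (hc : ∀ i, 0 < c i) (hd : ∀ j, 0 < d j)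
    (X : Fin k → Finset α) (Y : Fin m → α) :
    (∀ U : Finset α, U.Nonempty →
        (∑ j, d j * (if ({Y j} : Finset α) ∩ U = ∅ then (0:ℝ) else 1)) ≤
          ∑ i, c i * (if X i ∩ U = ∅ then (0:ℝ) else 1)) ↔
    (∀ h : Finset α → ℝ, h ∅ = 0 → (∀ S T : Finset α, S ⊆ T → h S ≤ h T) →
        (∑ j, d j * h {Y j}) ≤ ∑ i, c i * h (X i)) := by
  constructor
  · intro hstep h h0 hmono
    set g := fun a : α => h {a} with hgdef
    have hg0 : ∀ a, 0 ≤ g a := by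
      intro a
      rw [← h0]
      exact hmono ∅ {a} (Finset.empty_subset _)
    have key := step_aux c d hc X Y hstep
      (Finset.univ.filter fun a => 0 < g a).card g hg0 le_rfl
    refine le_trans key (Finset.sum_le_sum ?_)
    intro i _
    apply mul_le_mul_of_nonneg_left _ (hc i).le
    apply (Finset.fold_max_le _).mpr
    constructor
    · rw [← h0]; exact hmono ∅ (X i) (Finset.empty_subset _)
    · intro a haS
      exact hmono {a} (X i) (Finset.singleton_subset_iff.mpr haS)
  · intro hmonoV U hU
    apply hmonoV (fun S => if S ∩ U = ∅ then (0:ℝ) else 1)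
    · simp
    · intro S T hST
      by_cases hS : S ∩ U = ∅
      · simp only [if_pos hS]
        split_ifs <;> norm_num
      · have hT : T ∩ U ≠ ∅ := by
          obtain ⟨x, hx⟩ := Finset.nonempty_iff_ne_empty.mpr hS
          rw [Finset.mem_inter] at hx
          exact Finset.nonempty_iff_ne_empty.mp
            ⟨x, Finset.mem_inter.mpr ⟨hST hx.1, hx.2⟩⟩
        simp [hS, hT]
end

section
/- Let φ(X) be an inequality c_1 h(X_1)+...+c_n h(X_n) ≥ d_1 h(Y_1)+...+d_m h(Y_m) with c_i, d_i > 0 over variable set X, and fix A ∈ X. Define c_A = ∑_{i : A ∈ X_i} c_i and d_A = ∑_{i : A ∈ Y_i} d_i, and let φ^A be the A-reduction: (c_A − d_A)·h(X\{A}) + ∑_{i : A ∉ X_i} c_i h(X_i) ≥ ∑_{i : A ∉ Y_i} d_i h(Y_i) over X\{A}. Then φ is valid over all step functions on X if and only if for every A ∈ X: c_A ≥ d_A and φ^A is valid over all step functions on X\{A}. -/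
lemma step_sum_split {α : Type*} [Fintype α] [DecidableEq α] {k : ℕ}
    (c : Fin k → ℝ) (X : Fin k → Finset α) (U : Finset α) (A : α) (hA : A ∈ U) :
    (∑ i, c i * (if X i ∩ U = ∅ then (0:ℝ) else 1)) =
    (∑ i, if A ∈ X i then c i else 0) +
      ∑ i, if A ∈ X i then 0 else c i * (if X i ∩ (U.erase A) = ∅ then (0:ℝ) else 1) := by
  rw [← Finset.sum_add_distrib]
  apply Finset.sum_congr rfl
  intro i _
  by_cases h : A ∈ X i
  · have hne : X i ∩ U ≠ ∅ := by
      intro he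
      have := Finset.mem_inter.mpr ⟨h, hA⟩
      rw [he] at this; simp at this
    simp [h, hne]
  · have : X i ∩ U.erase A = X i ∩ U := by
      ext x
      simp only [Finset.mem_inter, Finset.mem_erase]
      constructor
      · rintro ⟨hx, _, hu⟩; exact ⟨hx, hu⟩
      · rintro ⟨hx, hu⟩
        exact ⟨hx, fun hxa => h (hxa ▸ hx), hu⟩
    simp [h, this]

/-- an inequality `∑ c_i h(X_i) ≥ ∑ d_j h(Y_j)` (positive
coefficients) over variable set `X = α` is valid over all step functions on `α` iff
for every `A ∈ α`: `c_A ≥ d_A` and the `A`-reduction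
`(c_A − d_A)·h(X\{A}) + ∑_{A ∉ X_i} c_i h(X_i) ≥ ∑_{A ∉ Y_j} d_j h(Y_j)`
is valid over all step functions on `X\{A}`. -/
theorem step_valid_iff_reductions_valid {α : Type*} [Fintype α] [DecidableEq α]
    (k m : ℕ) (c : Fin k → ℝ) (d : Fin m → ℝ)
    (hc : ∀ i, 0 < c i) (hd : ∀ j, 0 < d j)
    (X : Fin k → Finset α) (Y : Fin m → Finset α) :
    (∀ U : Finset α, U.Nonempty →
        (∑ j, d j * (if Y j ∩ U = ∅ then (0:ℝ) else 1)) ≤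
          ∑ i, c i * (if X i ∩ U = ∅ then (0:ℝ) else 1)) ↔
    (∀ A : α,
      ((∑ j, if A ∈ Y j then d j else 0) ≤ (∑ i, if A ∈ X i then c i else 0)) ∧
      (∀ U : Finset α, U ⊆ Finset.univ.erase A → U.Nonempty →
        (∑ j, if A ∈ Y j then 0 else d j * (if Y j ∩ U = ∅ then (0:ℝ) else 1)) ≤
          ((∑ i, if A ∈ X i then c i else 0) - (∑ j, if A ∈ Y j then d j else 0)) *
              (if (Finset.univ.erase A) ∩ U = ∅ then (0:ℝ) else 1) +
            (∑ i, if A ∈ X i then 0 else c i * (if X i ∩ U = ∅ then (0:ℝ) else 1)))) := by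
  constructor
  · intro h A
    constructor
    · have h1 := h {A} (Finset.singleton_nonempty A)
      rw [step_sum_split c X {A} A (Finset.mem_singleton_self A),
          step_sum_split d Y {A} A (Finset.mem_singleton_self A)] at h1
      simp only [Finset.erase_singleton, Finset.inter_empty, if_pos rfl, mul_zero] at h1
      simpa using h1
    · intro U hU hUne
      have hAU : A ∉ U := fun hx => (Finset.mem_erase.mp (hU hx)).1 rfl
      have h1 := h (insert A U) ⟨A, Finset.mem_insert_self A U⟩
      rw [step_sum_split c X _ A (Finset.mem_insert_self A U),
          step_sum_split d Y _ A (Finset.mem_insert_self A U),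
          Finset.erase_insert hAU] at h1
      have hind : (Finset.univ.erase A) ∩ U ≠ ∅ := by
        obtain ⟨x, hx⟩ := hUne
        intro he
        have : x ∈ (Finset.univ.erase A) ∩ U := Finset.mem_inter.mpr ⟨hU hx, hx⟩
        rw [he] at this; simp at this
      rw [if_neg hind, mul_one]
      linarith
  · intro h U hUne
    obtain ⟨A, hA⟩ := hUne
    obtain ⟨h1, h2⟩ := h A
    rw [step_sum_split c X U A hA, step_sum_split d Y U A hA]
    by_cases he : U.erase A = ∅
    · simp [he]
      linarith
    · have hne : (U.erase A).Nonempty := Finset.nonempty_iff_ne_empty.mpr he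
      have hsub : U.erase A ⊆ Finset.univ.erase A := fun x hx =>
        Finset.mem_erase.mpr ⟨(Finset.mem_erase.mp hx).1, Finset.mem_univ x⟩
      have h3 := h2 (U.erase A) hsub hne
      have hind : (Finset.univ.erase A) ∩ (U.erase A) ≠ ∅ := by
        obtain ⟨x, hx⟩ := hne
        intro hemp
        have : x ∈ (Finset.univ.erase A) ∩ (U.erase A) := Finset.mem_inter.mpr ⟨hsub hx, hx⟩
        rw [hemp] at this; simp at this
      rw [if_neg hind, mul_one] at h3
      linarith
end

section
/- Let Σ be an acyclic set of conditionals (V|U) over variable set X and let h be a polymatroid on X. Then there exists a modular function f on X such that f(X) = h(X) and f(V|U) ≤ h(V|U) for every (V|U) ∈ Σ; concretely, ordering X = {1,...,n} compatibly with the acyclicity (so U < V elementwise for each (V|U) ∈ Σ), the function f(S) = ∑_{i ∈ S} h([i]) − h([i−1]) works. -/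
open Finset

private lemma tele_aux (n : ℕ) (h : Finset (Fin n) → ℝ) (h0 : h ∅ = 0)
    (S : Finset (Fin n)) :
    ∑ i : Fin n, (h (S.filter fun j => j ≤ i) - h (S.filter fun j => j < i)) = h S := by
  have hA : ∀ i : Fin n, S.filter (fun j => j ≤ i) = S.filter (fun j : Fin n => (j:ℕ) < (i:ℕ)+1) := by
    intro i; apply filter_congr; intro j _; rw [Fin.le_def]; exact ⟨fun hh => by omega, fun hh => by omega⟩
  have hB : ∀ i : Fin n, S.filter (fun j => j < i) = S.filter (fun j : Fin n => (j:ℕ) < (i:ℕ)) := by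
    intro i; apply filter_congr; intro j _; rw [Fin.lt_def]
  calc ∑ i : Fin n, (h (S.filter fun j => j ≤ i) - h (S.filter fun j => j < i))
      = ∑ i : Fin n, (h (S.filter fun j : Fin n => (j:ℕ) < (i:ℕ)+1) - h (S.filter fun j : Fin n => (j:ℕ) < (i:ℕ))) := by
        refine Finset.sum_congr rfl fun i _ => ?_
        rw [hA i, hB i]
    _ = ∑ k ∈ Finset.range n, (h (S.filter fun j : Fin n => (j:ℕ) < k+1) - h (S.filter fun j : Fin n => (j:ℕ) < k)) :=
        Fin.sum_univ_eq_sum_range (fun k => h (S.filter fun j : Fin n => (j:ℕ) < k+1) - h (S.filter fun j : Fin n => (j:ℕ) < k)) n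
    _ = h (S.filter fun j : Fin n => (j:ℕ) < n) - h (S.filter fun j : Fin n => (j:ℕ) < 0) :=
        Finset.sum_range_sub (fun k => h (S.filter fun j : Fin n => (j:ℕ) < k)) n
    _ = h S := by
        have h1 : S.filter (fun j : Fin n => (j:ℕ) < n) = S := filter_true_of_mem fun j _ => j.isLt
        have h2 : S.filter (fun j : Fin n => (j:ℕ) < 0) = ∅ := filter_false_of_mem (fun j _ => by omega)
        rw [h1, h2, h0, sub_zero]

private lemma filter_le_eq_filter_lt {n : ℕ} (S : Finset (Fin n)) (i : Fin n) (hi : i ∉ S) :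
    S.filter (fun j => j ≤ i) = S.filter (fun j => j < i) := by
  apply filter_congr
  intro j hj
  constructor
  · intro hle
    exact lt_of_le_of_ne hle (by rintro rfl; exact hi hj)
  · exact le_of_lt


/-- for an acyclic set `Sig` of conditionals `(V|U)` (encoded as pairs
`(U, V)`, with acyclicity witnessed by the order on `Fin n`: `i < j` whenever
`i ∈ U` and `j ∈ V \ U`) and a polymatroid `h`, the concrete modular function
`f S = ∑_{i ∈ S} (h [i] − h [i−1])` satisfies `f(univ) = h(univ)` and
`f(V|U) ≤ h(V|U)` for each conditional; in particular such a modular `f` exists. -/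
theorem acyclic_modular_minorant (n : ℕ)
    (Sig : Finset (Finset (Fin n) × Finset (Fin n)))
    (h : Finset (Fin n) → ℝ)
    (h0 : h ∅ = 0)
    (hmono : ∀ Y Z : Finset (Fin n), Y ⊆ Z → h Y ≤ h Z)
    (hsub : ∀ Y Z : Finset (Fin n), h (Y ∩ Z) + h (Y ∪ Z) ≤ h Y + h Z)
    (hacyc : ∀ σ ∈ Sig, ∀ i ∈ σ.1, ∀ j ∈ σ.2 \ σ.1, i < j) :
    ∃ f : Finset (Fin n) → ℝ,
      (∀ Y Z : Finset (Fin n), f Y + f Z = f (Y ∩ Z) + f (Y ∪ Z)) ∧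
      f Finset.univ = h Finset.univ ∧
      (∀ σ ∈ Sig, f (σ.1 ∪ σ.2) - f σ.1 ≤ h (σ.1 ∪ σ.2) - h σ.1) ∧
      (∀ S : Finset (Fin n),
        f S = ∑ i ∈ S,
          (h (Finset.univ.filter fun j => j ≤ i) -
           h (Finset.univ.filter fun j => j < i))) := by
  classical
  set g : Fin n → ℝ := fun i =>
    h (Finset.univ.filter fun j => j ≤ i) - h (Finset.univ.filter fun j => j < i) with hg
  refine ⟨fun S => ∑ i ∈ S, g i, ?_, ?_, ?_, fun S => rfl⟩
  · intro Y Z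
    have := Finset.sum_union_inter (s₁ := Y) (s₂ := Z) (f := g)
    linarith
  · simp only [hg]
    exact tele_aux n h h0 Finset.univ
  · -- main inequality
    intro σ hσ
    set U := σ.1 with hU
    set V := σ.2 with hV
    set T := U ∪ V with hT
    have hUT : U ⊆ T := Finset.subset_union_left
    -- per index bound: for i ∈ T, g i ≤ h (T.filter ≤ i) - h (T.filter < i)
    have key : ∀ i ∈ T, g i ≤ h (T.filter fun j => j ≤ i) - h (T.filter fun j => j < i) := by
      intro i hiT
      have hYZinter : (Finset.univ.filter fun j => j < i) ∩ (T.filter fun j => j ≤ i)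
          = T.filter fun j => j < i := by
        ext j
        simp only [Finset.mem_inter, Finset.mem_filter, Finset.mem_univ, true_and]
        constructor
        · rintro ⟨h1, h2, h3⟩; exact ⟨h2, h1⟩
        · rintro ⟨h1, h2⟩; exact ⟨h2, h1, le_of_lt h2⟩
      have hYZunion : (Finset.univ.filter fun j => j < i) ∪ (T.filter fun j => j ≤ i)
          = Finset.univ.filter fun j => j ≤ i := by
        ext j
        simp only [Finset.mem_union, Finset.mem_filter, Finset.mem_univ, true_and]
        constructor
        · rintro (h1 | ⟨h1, h2⟩)
          · exact le_of_lt h1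
          · exact h2
        · intro hle
          rcases lt_or_eq_of_le hle with h1 | h1
          · exact Or.inl h1
          · exact Or.inr ⟨h1 ▸ hiT, hle⟩
      have := hsub (Finset.univ.filter fun j => j < i) (T.filter fun j => j ≤ i)
      rw [hYZinter, hYZunion] at this
      simp only [hg]
      linarith
    -- d over T\U equals h T - h U
    have hdsum : ∑ i ∈ T \ U, (h (T.filter fun j => j ≤ i) - h (T.filter fun j => j < i))
        = h T - h U := by
      have htotT : ∑ i : Fin n, (h (T.filter fun j => j ≤ i) - h (T.filter fun j => j < i)) = h T :=
        tele_aux n h h0 T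
      have htotU : ∑ i : Fin n, (h (U.filter fun j => j ≤ i) - h (U.filter fun j => j < i)) = h U :=
        tele_aux n h h0 U
      -- pointwise: for i ∉ T\U, d i = e i ; for i ∈ T\U, e i = 0
      have hde : ∀ i ∈ Finset.univ \ (T \ U),
          (h (T.filter fun j => j ≤ i) - h (T.filter fun j => j < i))
          = (h (U.filter fun j => j ≤ i) - h (U.filter fun j => j < i)) := by
        intro i hi
        simp only [Finset.mem_sdiff, Finset.mem_univ, true_and, not_and, not_not] at hi
        by_cases hiU : i ∈ U
        · -- T.filter ≤ i = U.filter ≤ i and same for <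
          have hfil : ∀ p : Fin n → Prop, (∀ j, p j → j ≤ i) →
              ∀ _ : DecidablePred p, T.filter p = U.filter p := by
            intro p hp _
            ext j
            simp only [Finset.mem_filter]
            constructor
            · rintro ⟨hjT, hjp⟩
              refine ⟨?_, hjp⟩
              rw [hT, Finset.mem_union] at hjT
              rcases hjT with hjU | hjV
              · exact hjU
              · by_contra hjU
                have : i < j := hacyc σ hσ i hiU j (Finset.mem_sdiff.2 ⟨hjV, hjU⟩)
                exact absurd (hp j hjp) (not_le.2 this)
            · rintro ⟨hjU, hjp⟩
              exact ⟨hUT hjU, hjp⟩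
          rw [hfil (fun j => j ≤ i) (fun j hj => hj) _,
              hfil (fun j => j < i) (fun j hj => le_of_lt hj) _]
        · have hiT : i ∉ T := fun hh => hiU (hi hh)
          rw [filter_le_eq_filter_lt T i hiT, filter_le_eq_filter_lt U i hiU]
          ring
      have he0 : ∀ i ∈ T \ U,
          (h (U.filter fun j => j ≤ i) - h (U.filter fun j => j < i)) = 0 := by
        intro i hi
        have hiU : i ∉ U := (Finset.mem_sdiff.1 hi).2
        rw [filter_le_eq_filter_lt U i hiU]
        ring
      have hsplitT : ∑ i ∈ T \ U, (h (T.filter fun j => j ≤ i) - h (T.filter fun j => j < i))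
          + ∑ i ∈ Finset.univ \ (T \ U), (h (T.filter fun j => j ≤ i) - h (T.filter fun j => j < i))
          = h T := by
        rw [← htotT, ← Finset.sum_sdiff (Finset.subset_univ (T \ U))]
        ring
      have hsplitU : ∑ i ∈ T \ U, (h (U.filter fun j => j ≤ i) - h (U.filter fun j => j < i))
          + ∑ i ∈ Finset.univ \ (T \ U), (h (U.filter fun j => j ≤ i) - h (U.filter fun j => j < i))
          = h U := by
        rw [← htotU, ← Finset.sum_sdiff (Finset.subset_univ (T \ U))]
        ring
      have e1 : ∑ i ∈ T \ U, (h (U.filter fun j => j ≤ i) - h (U.filter fun j => j < i)) = 0 :=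
        Finset.sum_eq_zero he0
      have e2 := Finset.sum_congr rfl hde
      linarith
    have hfsplit : ∑ i ∈ T, g i - ∑ i ∈ U, g i = ∑ i ∈ T \ U, g i := by
      rw [← Finset.sum_sdiff hUT]; ring
    calc ∑ i ∈ T, g i - ∑ i ∈ U, g i = ∑ i ∈ T \ U, g i := hfsplit
      _ ≤ ∑ i ∈ T \ U, (h (T.filter fun j => j ≤ i) - h (T.filter fun j => j < i)) :=
          Finset.sum_le_sum fun i hi => key i ((Finset.mem_sdiff.1 hi).1)
      _ = h T - h U := hdsum
end
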